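/- For a simple random walk on a finite connected graph G with m edges, for any nonnegative edge-cost function f and any vertices x, y: H^f(x,y) ≤ Σ_{e∈E} (2·d_y(e) + 1)·f(e) ≤ m^2·max(f), where d_y(e) is the minimum distance from y to an endpoint of e. -/

import Mathlib

/-!
Let `L = D - A` be the graph Laplacian and, for each vertex `p`, let `g_p` solve `L g_p = δ_p`
off `y` with `g_p y = 0`; the minimum principle makes this Dirichlet problem uniquely solvable.
Since `L` is symmetric, `H x = ∑_v (L H) v · g_x v = ∑_v b v · g_v x` with `b v = ∑_{u ~ v} f(vu)`.
The minimum principle gives `g_v x ≤ g_v v`, and `g_v v ≤ dist v y` by induction along a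
geodesic: `g_v v - g_v u ≤ 1` for a neighbour `u`, and `g_v u = g_u v ≤ g_u u`. Splitting `b`
over edges, each edge `pq` contributes `f(pq) (dist p y + dist q y) ≤ (2 d_y(pq) + 1) f(pq)`.

For the second bound, every level `j < d_y(e)` is attained by some edge, so `d_y e` is at most
the number of edges strictly below `e`; summing, `∑ (2 d_y e + 1) ≤ 2 · #{strictly ordered pairs}
+ m ≤ m²`.
-/

/-- `IsCostHittingTime G a f H` : `H` satisfies the linear system characterizing the
expected total cost (relative to the edge-cost function `f`) of the simple random walk
on `G` started at a vertex and stopped at the absorbing vertex `a`: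
`H a = 0` and, for `v ≠ a`, `H v = (1/deg v) ∑_{u ~ v} (f {v,u} + H u)`. -/
def IsCostHittingTime {V : Type*} [Fintype V] (G : SimpleGraph V) [DecidableRel G.Adj]
    (a : V) (f : Sym2 V → ℝ) (H : V → ℝ) : Prop :=
  H a = 0 ∧ ∀ v, v ≠ a →
    (G.degree v : ℝ) * H v = ∑ u ∈ G.neighborFinset v, (f s(v, u) + H u)

open Finset Matrix

theorem Finset.sum_two_mul_add_one_le_card_sq {α : Type*} (s : Finset α)
    (d : α → ℕ) (hd : ∀ e ∈ s, d e ≤ #{e' ∈ s | d e' < d e}) :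
    ∑ e ∈ s, (2 * d e + 1) ≤ #s ^ 2 := by
  classical
  have hpair : ∀ e e' : α, ((if d e' < d e then 1 else 0) + (if d e < d e' then 1 else 0) +
      if e' = e then 1 else 0 : ℕ) ≤ 1 := by
    intro e e'
    rcases eq_or_ne e' e with rfl | hne
    · simp
    · simp only [hne, if_false]
      split_ifs <;> omega
  -- each ordered pair is counted by at most one of: `<`, `>`, the diagonal
  calc ∑ e ∈ s, (2 * d e + 1)
      ≤ ∑ e ∈ s, (2 * #{e' ∈ s | d e' < d e} + 1) :=
        sum_le_sum fun e he => by linarith [hd e he]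
    _ = ∑ e ∈ s, ∑ e' ∈ s, ((if d e' < d e then 1 else 0) + (if d e < d e' then 1 else 0) +
          if e' = e then 1 else 0) := by
        simp only [sum_add_distrib, card_filter, sum_ite_eq', two_mul]
        congr 1
        · exact congrArg _ sum_comm
        · exact sum_congr rfl fun e he => by simp [he]
    _ ≤ ∑ e ∈ s, ∑ e' ∈ s, 1 := sum_le_sum fun e _ => sum_le_sum fun e' _ => hpair e e'
    _ = #s ^ 2 := by simp [sq]

namespace SimpleGraph

section Distance

variable {V : Type*} {G : SimpleGraph V}

theorem Connected.exists_adj_dist_add_one_eq (hconn : G.Connected) {a y : V} (hay : a ≠ y) :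
    ∃ u, G.Adj a u ∧ G.dist u y + 1 = G.dist a y := by
  obtain ⟨w, hw⟩ := hconn.exists_walk_length_eq_dist a y
  cases w with
  | nil => exact absurd rfl hay
  | @cons _ u _ hadj rest =>
    refine ⟨u, hadj, le_antisymm ?_ ?_⟩
    · simpa [← hw] using dist_le rest
    · have := hconn.dist_triangle (u := a) (v := u) (w := y)
      rwa [dist_eq_one_iff_adj.2 hadj, add_comm] at this

theorem Connected.exists_adj_dist_eq_add_one_of_lt (hconn : G.Connected) {a y : V} {j : ℕ}
    (hj : j < G.dist a y) : ∃ p q, G.Adj p q ∧ G.dist p y = j + 1 ∧ G.dist q y = j := by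
  induction hn : G.dist a y generalizing a with
  | zero => omega
  | succ n ih =>
    have hay : a ≠ y := by rintro rfl; simp at hn
    obtain ⟨u, hau, hu⟩ := hconn.exists_adj_dist_add_one_eq hay
    rcases (Nat.lt_succ_iff_lt_or_eq.1 (hn ▸ hj)) with hjn | rfl
    · exact ih (a := u) (by omega) (by omega)
    · exact ⟨a, u, hau, hn, by omega⟩

theorem Adj.dist_add_dist_le {p q : V} (hpq : G.Adj p q) (y : V) :
    G.dist p y + G.dist q y ≤ 2 * min (G.dist p y) (G.dist q y) + 1 := by
  rcases hpq.diff_dist_adj (u := y) with h | h | h <;>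
    rw [dist_comm (u := y), dist_comm (u := y)] at h <;> omega

end Distance

section EdgeLevels

variable {V : Type*} [Fintype V] {G : SimpleGraph V} [DecidableRel G.Adj]

theorem le_card_edgeFinset_filter_lt (hconn : G.Connected) {y : V} {dY : Sym2 V → ℕ}
    (hdY : ∀ u v : V, dY s(u, v) = min (G.dist u y) (G.dist v y)) {e : Sym2 V}
    (he : e ∈ G.edgeFinset) : dY e ≤ #{e' ∈ G.edgeFinset | dY e' < dY e} := by
  calc dY e = #(range (dY e)) := (card_range _).symm
    _ ≤ #(image dY {e' ∈ G.edgeFinset | dY e' < dY e}) := card_le_card fun j hj => ?_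
    _ ≤ _ := card_image_le
  induction e using Sym2.ind with
  | _ p q =>
    have hjp : j < G.dist p y := (mem_range.1 hj).trans_le (hdY p q ▸ min_le_left _ _)
    obtain ⟨a, b, hab, ha, hb⟩ := hconn.exists_adj_dist_eq_add_one_of_lt hjp
    have hdab : dY s(a, b) = j := by rw [hdY, ha, hb]; omega
    exact mem_image.2 ⟨s(a, b), mem_filter.2 ⟨mem_edgeFinset.2 hab, hdab ▸ mem_range.1 hj⟩, hdab⟩

theorem sum_two_mul_add_one_le_card_edgeFinset_sq (hconn : G.Connected) {y : V} {dY : Sym2 V → ℕ}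
    (hdY : ∀ u v : V, dY s(u, v) = min (G.dist u y) (G.dist v y)) :
    ∑ e ∈ G.edgeFinset, (2 * dY e + 1) ≤ #G.edgeFinset ^ 2 :=
  sum_two_mul_add_one_le_card_sq _ _ fun _ he => le_card_edgeFinset_filter_lt hconn hdY he

end EdgeLevels

variable {V : Type*} [Fintype V] [DecidableEq V] {G : SimpleGraph V} [DecidableRel G.Adj]

section MinimumPrinciple

variable {R : Type*} [CommRing R] [LinearOrder R] [IsStrictOrderedRing R]

theorem apply_eq_of_isMin_of_lapMatrix_mulVec_nonneg {h : V → R} {w : V} (hmin : ∀ u, h w ≤ h u)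
    (hL : 0 ≤ (G.lapMatrix R *ᵥ h) w) {u : V} (hwu : G.Adj w u) : h u = h w := by
  have hsum : ∑ v ∈ G.neighborFinset w, (h w - h v) = (G.lapMatrix R *ᵥ h) w := by
    rw [lapMatrix_mulVec_apply, sum_sub_distrib, sum_const, card_neighborFinset_eq_degree,
      nsmul_eq_mul]
  have hnonpos : ∀ v ∈ G.neighborFinset w, h w - h v ≤ 0 := fun v _ => sub_nonpos.2 (hmin v)
  have hzero := (sum_eq_zero_iff_of_nonpos hnonpos).1
    (le_antisymm (sum_nonpos hnonpos) (hsum ▸ hL)) u (by simpa using hwu)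
  exact (sub_eq_zero.1 hzero).symm

theorem Connected.nonneg_of_lapMatrix_mulVec_nonneg (hconn : G.Connected) {A : Set V}
    (hA : A.Nonempty) {h : V → R} (hA0 : ∀ v ∈ A, 0 ≤ h v)
    (hL : ∀ v ∉ A, 0 ≤ (G.lapMatrix R *ᵥ h) v) (v : V) : 0 ≤ h v := by
  have := hconn.nonempty
  obtain ⟨w, hw⟩ := Finite.exists_min h
  by_contra! hv
  have hw0 : h w < 0 := (hw v).trans_lt hv
  have hreach : ∀ {a b : V}, G.Reachable a b → h a = h w → h b = h w := by
    rintro a b ⟨p⟩ ha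
    induction p with
    | nil => exact ha
    | cons hadj _ ih =>
      refine ih ((apply_eq_of_isMin_of_lapMatrix_mulVec_nonneg (ha ▸ hw) (hL _ ?_) hadj).trans ha)
      exact fun hA' => (hA0 _ hA').not_gt (ha ▸ hw0)
  obtain ⟨a, ha⟩ := hA
  exact (hA0 a ha).not_gt (hreach (hconn w a) rfl ▸ hw0)

theorem Connected.eq_zero_of_lapMatrix_mulVec_eq_zero (hconn : G.Connected) {y : V} {g : V → R}
    (hy : g y = 0) (hL : ∀ v ≠ y, (G.lapMatrix R *ᵥ g) v = 0) : g = 0 := by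
  have hpos := hconn.nonneg_of_lapMatrix_mulVec_nonneg (A := {y}) (Set.singleton_nonempty y)
    (by simp [hy]) fun v hv => (hL v hv).ge
  have hneg := hconn.nonneg_of_lapMatrix_mulVec_nonneg (h := -g) (A := {y})
    (Set.singleton_nonempty y) (by simp [hy]) fun v hv => by simp [mulVec_neg, hL v hv]
  funext v
  exact le_antisymm (neg_nonneg.1 (hneg v)) (hpos v)

end MinimumPrinciple

theorem Connected.exists_apply_eq_zero_and_lapMatrix_mulVec_eq {R : Type*} [Field R]
    [LinearOrder R] [IsStrictOrderedRing R] (hconn : G.Connected) (y : V) (b : V → R) :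
    ∃ g : V → R, g y = 0 ∧ ∀ v ≠ y, (G.lapMatrix R *ᵥ g) v = b v := by
  -- the minimum principle makes `L` with row `y` replaced by `δ_y` injective, hence invertible
  set M := (G.lapMatrix R).updateRow y (Pi.single y 1)
  have hM : ∀ g v, (M *ᵥ g) v = if v = y then g y else (G.lapMatrix R *ᵥ g) v := by
    intro g v
    rw [updateRow_mulVec, Function.update_apply, single_one_dotProduct]
  have hinj : Function.Injective M.mulVec := by
    intro g₁ g₂ hg
    refine sub_eq_zero.1 (hconn.eq_zero_of_lapMatrix_mulVec_eq_zero (y := y) ?_ fun v hv => ?_)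
    · simpa [hM, sub_eq_zero] using congrFun hg y
    · simpa [hM, hv, mulVec_sub, sub_eq_zero] using congrFun hg v
  obtain ⟨g, hg⟩ := mulVec_surjective_iff_isUnit.2 (mulVec_injective_iff_isUnit.1 hinj)
    (Function.update b y 0)
  refine ⟨g, by simpa [hM] using congrFun hg y, fun v hv => ?_⟩
  simpa [hM, hv] using congrFun hg v

/-- `deg p * g x` is the expected number of visits to `p` before `y` of the walk started at `x`,
and `g p` is the effective resistance between `p` and `y`. -/
def IsGreenFunction {R : Type*} [CommRing R] (G : SimpleGraph V) [DecidableRel G.Adj]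
    (y p : V) (g : V → R) : Prop :=
  g y = 0 ∧ ∀ v ≠ y, (G.lapMatrix R *ᵥ g) v = (Pi.single p 1 : V → R) v

theorem Connected.exists_isGreenFunction {R : Type*} [Field R] [LinearOrder R]
    [IsStrictOrderedRing R] (hconn : G.Connected) (y p : V) :
    ∃ g : V → R, G.IsGreenFunction y p g :=
  hconn.exists_apply_eq_zero_and_lapMatrix_mulVec_eq y _

namespace IsGreenFunction

variable {R : Type*} [CommRing R] {y p : V} {g : V → R}

/-- Green's reciprocity: since `L` is symmetric, `u x = ⟪u, L g⟫ = ⟪L u, g⟫`. -/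
theorem apply_eq_sum_lapMatrix_mulVec_mul {x : V} (hg : G.IsGreenFunction y x g) {u : V → R}
    (hu : u y = 0) : u x = ∑ v, (G.lapMatrix R *ᵥ u) v * g v := by
  have hLg : u ⬝ᵥ (G.lapMatrix R *ᵥ g) = u ⬝ᵥ Pi.single x 1 := by
    refine sum_congr rfl fun v _ => ?_
    by_cases hv : v = y
    · simp [hv, hu]
    · rw [hg.2 v hv]
  rw [← mul_one (u x), ← dotProduct_single, ← hLg, dotProduct_mulVec, ← mulVec_transpose,
    (G.isSymm_lapMatrix R).eq, dotProduct]

theorem apply_comm {q : V} {g' : V → R} (hg : G.IsGreenFunction y p g)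
    (hg' : G.IsGreenFunction y q g') : g q = g' p := by
  calc g q = ∑ v, (G.lapMatrix R *ᵥ g) v * g' v := hg'.apply_eq_sum_lapMatrix_mulVec_mul hg.1
    _ = ∑ v, (Pi.single p 1 : V → R) v * g' v := sum_congr rfl fun v _ => by
      by_cases hv : v = y
      · simp [hv, hg'.1]
      · rw [hg.2 v hv]
    _ = g' p := by simp [Pi.single_apply]

section Order

variable [LinearOrder R] [IsStrictOrderedRing R]

theorem nonneg (hconn : G.Connected) (hg : G.IsGreenFunction y p g) (v : V) : 0 ≤ g v :=
  hconn.nonneg_of_lapMatrix_mulVec_nonneg (A := {y}) (Set.singleton_nonempty y)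
    (by simp [hg.1]) (fun w hw => by rw [hg.2 w hw, Pi.single_apply]; split_ifs <;> simp) v

theorem le_apply_self (hconn : G.Connected) (hg : G.IsGreenFunction y p g) (v : V) :
    g v ≤ g p := by
  refine sub_nonneg.1 <| hconn.nonneg_of_lapMatrix_mulVec_nonneg (h := fun w => g p - g w)
    (A := {p, y}) (Set.insert_nonempty p {y}) ?_ (fun w hw => ?_) v
  · simpa [hg.1] using hg.nonneg hconn p
  · simp only [Set.mem_insert_iff, Set.mem_singleton_iff, not_or] at hw
    have hshift : (fun w => g p - g w) = (g p) • (fun _ => (1 : R)) - g := by ext; simp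
    rw [hshift, mulVec_sub, mulVec_smul, lapMatrix_mulVec_const_eq_zero, Pi.sub_apply, hg.2 w hw.2,
      Pi.single_eq_of_ne hw.1]
    simp

theorem apply_self_sub_le_one (hconn : G.Connected) (hg : G.IsGreenFunction y p g) (hpy : p ≠ y)
    {u : V} (hpu : G.Adj p u) : g p - g u ≤ 1 := by
  have hsum : ∑ v ∈ G.neighborFinset p, (g p - g v) = 1 := by
    rw [sum_sub_distrib, sum_const, card_neighborFinset_eq_degree, nsmul_eq_mul,
      ← lapMatrix_mulVec_apply, hg.2 p hpy, Pi.single_eq_same]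
  exact hsum ▸ single_le_sum (f := fun v => g p - g v)
    (fun v _ => sub_nonneg.2 (hg.le_apply_self hconn v)) (by simpa using hpu)

theorem apply_self_le_dist (hconn : G.Connected) {g : V → V → R}
    (hg : ∀ p, G.IsGreenFunction y p (g p)) (p : V) : g p p ≤ G.dist p y := by
  induction hn : G.dist p y generalizing p with
  | zero =>
    obtain rfl := hconn.dist_eq_zero_iff.1 hn
    simp [(hg p).1]
  | succ n ih =>
    have hpy : p ≠ y := by rintro rfl; simp at hn
    obtain ⟨u, hpu, hu⟩ := hconn.exists_adj_dist_add_one_eq hpy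
    calc g p p ≤ g p u + 1 := by linarith [(hg p).apply_self_sub_le_one hconn hpy hpu]
      _ = g u p + 1 := by rw [(hg p).apply_comm (hg u)]
      _ ≤ g u u + 1 := by gcongr; exact (hg u).le_apply_self hconn p
      _ ≤ n + 1 := by gcongr; exact ih u (by omega)
      _ = (n + 1 : ℕ) := by push_cast; rfl

end Order

end IsGreenFunction

theorem sum_sum_neighborFinset_eq_sum_edgeFinset {M : Type*} [AddCommMonoid M]
    (F : V → Sym2 V → M) :
    ∑ v, ∑ u ∈ G.neighborFinset v, F v s(v, u) = ∑ e ∈ G.edgeFinset, ∑ v ∈ e.toFinset, F v e := by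
  have hinc : ∀ v, ∑ u ∈ G.neighborFinset v, F v s(v, u) = ∑ e ∈ G.incidenceFinset v, F v e := by
    intro v
    rw [← sum_image (g := fun u => s(v, u)) fun _ _ _ _ h => Sym2.congr_right.1 h]
    congr 1
    ext e
    induction e using Sym2.ind with
    | _ p q =>
      simp only [incidenceFinset, Set.mem_toFinset, mk'_mem_incidenceSet_iff, mem_image,
        mem_neighborFinset, Sym2.eq_iff]
      constructor
      · rintro ⟨u, hvu, ⟨rfl, rfl⟩ | ⟨rfl, rfl⟩⟩
        · exact ⟨hvu, .inl rfl⟩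
        · exact ⟨hvu.symm, .inr rfl⟩
      · rintro ⟨hpq, rfl | rfl⟩
        · exact ⟨q, hpq, .inl ⟨rfl, rfl⟩⟩
        · exact ⟨p, hpq.symm, .inr ⟨rfl, rfl⟩⟩
  rw [sum_congr rfl fun v _ => hinc v]
  exact sum_comm' fun v e => by simp [incidenceFinset_eq_filter, Sym2.mem_toFinset, and_comm]

theorem sum_sum_neighborFinset_mul_dist_le {f : Sym2 V → ℝ} (hf : ∀ e ∈ G.edgeFinset, 0 ≤ f e)
    {y : V} {dY : Sym2 V → ℕ} (hdY : ∀ u v : V, dY s(u, v) = min (G.dist u y) (G.dist v y)) :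
    ∑ v, (∑ u ∈ G.neighborFinset v, f s(v, u)) * G.dist v y ≤
      ∑ e ∈ G.edgeFinset, (2 * (dY e : ℝ) + 1) * f e := by
  simp_rw [sum_mul]
  rw [sum_sum_neighborFinset_eq_sum_edgeFinset (F := fun v e => f e * G.dist v y)]
  refine sum_le_sum fun e he => ?_
  induction e using Sym2.ind with
  | _ p q =>
    have hpq := mem_edgeFinset.1 he
    have hdist : (G.dist p y + G.dist q y : ℝ) ≤ 2 * (dY s(p, q) : ℝ) + 1 := by
      rw [hdY]; exact_mod_cast hpq.dist_add_dist_le y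
    rw [Sym2.toFinset_mk_eq, sum_pair hpq.ne, ← mul_add, mul_comm]
    exact mul_le_mul_of_nonneg_right hdist (hf _ he)

end SimpleGraph

open SimpleGraph

theorem IsCostHittingTime.lapMatrix_mulVec_apply {V : Type*} [Fintype V] [DecidableEq V]
    {G : SimpleGraph V} [DecidableRel G.Adj] {y : V} {f : Sym2 V → ℝ} {H : V → ℝ}
    (hH : IsCostHittingTime G y f H) {v : V} (hv : v ≠ y) :
    (G.lapMatrix ℝ *ᵥ H) v = ∑ u ∈ G.neighborFinset v, f s(v, u) := by
  rw [SimpleGraph.lapMatrix_mulVec_apply, hH.2 v hv, sum_add_distrib, add_sub_cancel_right]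

theorem IsCostHittingTime.le_sum_mul_dist {V : Type*} [Fintype V] [DecidableEq V]
    {G : SimpleGraph V} [DecidableRel G.Adj] (hconn : G.Connected) {y : V} {f : Sym2 V → ℝ}
    (hf : ∀ e ∈ G.edgeFinset, 0 ≤ f e) {H : V → ℝ} (hH : IsCostHittingTime G y f H) (x : V) :
    H x ≤ ∑ v, (∑ u ∈ G.neighborFinset v, f s(v, u)) * G.dist v y := by
  choose g hg using hconn.exists_isGreenFunction (R := ℝ) y
  rw [(hg x).apply_eq_sum_lapMatrix_mulVec_mul hH.1]
  refine sum_le_sum fun v _ => ?_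
  by_cases hv : v = y
  · simp [hv, (hg x).1]
  · rw [hH.lapMatrix_mulVec_apply hv, (hg x).apply_comm (hg v)]
    exact mul_le_mul_of_nonneg_left
      (((hg v).le_apply_self hconn x).trans (IsGreenFunction.apply_self_le_dist hconn hg v))
      (sum_nonneg fun u hu => hf _ (by simpa using hu))

theorem cost_hitting_time_le {V : Type*} [Fintype V] [DecidableEq V]
    (G : SimpleGraph V) [DecidableRel G.Adj] (hconn : G.Connected)
    (m : ℕ) (hm : m = G.edgeFinset.card)
    (f : Sym2 V → ℝ) (hf : ∀ e ∈ G.edgeFinset, 0 ≤ f e)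
    (x y : V)
    (dY : Sym2 V → ℕ) (hdY : ∀ u v : V, dY s(u, v) = min (G.dist u y) (G.dist v y))
    (H : V → ℝ) (hH : IsCostHittingTime G y f H)
    (hne : G.edgeFinset.Nonempty) :
    H x ≤ ∑ e ∈ G.edgeFinset, (2 * (dY e : ℝ) + 1) * f e ∧
      ∑ e ∈ G.edgeFinset, (2 * (dY e : ℝ) + 1) * f e ≤
        (m : ℝ) ^ 2 * G.edgeFinset.sup' hne f := by
  refine ⟨(hH.le_sum_mul_dist hconn hf x).trans (sum_sum_neighborFinset_mul_dist_le hf hdY), ?_⟩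
  have hmax : 0 ≤ G.edgeFinset.sup' hne f :=
    (hf _ hne.choose_spec).trans (le_sup' f hne.choose_spec)
  have hcount : (∑ e ∈ G.edgeFinset, (2 * (dY e : ℝ) + 1)) ≤ (m : ℝ) ^ 2 := by
    exact_mod_cast hm ▸ sum_two_mul_add_one_le_card_edgeFinset_sq hconn hdY
  calc ∑ e ∈ G.edgeFinset, (2 * (dY e : ℝ) + 1) * f e
      ≤ ∑ e ∈ G.edgeFinset, (2 * (dY e : ℝ) + 1) * G.edgeFinset.sup' hne f :=
        sum_le_sum fun e he => mul_le_mul_of_nonneg_left (le_sup' f he) (by positivity)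
    _ ≤ (m : ℝ) ^ 2 * G.edgeFinset.sup' hne f := by
        rw [← sum_mul]; exact mul_le_mul_of_nonneg_right hcount hmax
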